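/- arXiv:2407.01826 — 11 statements merged into one kernel-verified Lean document; each statement's English description precedes it below -/
import Mathlib

section
/- (Lemma 4.2 of the paper, negabinary truncation error, exact form.) Let η ∈ ℕ. For every integer n, the negabinary truncation error satisfies n − t_η(n) ∈ [−(2^{η+1}−2)/3, (2^{η+2}−1)/3] when η is even, and n − t_η(n) ∈ [−(2^{η+2}−2)/3, (2^{η+1}−1)/3] when η is odd. Moreover, if the digits D₀, …, D_η are independent fair Bernoulli random variables with values in {0,1} and R := Σ_{i=0}^{η} D_i·(−2)^i, then E[−R] = ((−2)^{η+1} − 1)/6; in particular the negabinary truncation error is biased, with E[t_η(N) − N] = ((−2)^{η+1} − 1)/6 whenever the low η+1 negabinary digits of N are independent fair bits. -/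
/-- The `i`-th digit of the (unique) negabinary expansion of an integer. -/
def nbDigit : ℤ → ℕ → ℤ
  | n, 0 => n % 2
  | n, i + 1 => nbDigit ((n - n % 2) / (-2)) i

/-- Negabinary truncation `t_η`: the negabinary digits of index `≤ η` are set
to zero, i.e. `t_η(n) = n - ∑_{i ≤ η} dᵢ (-2)^i`. -/
def tNeg (η : ℕ) (n : ℤ) : ℤ :=
  n - ∑ i ∈ Finset.range (η + 1), nbDigit n i * (-2) ^ i

def nbS (η : ℕ) (n : ℤ) : ℤ := ∑ i ∈ Finset.range (η + 1), nbDigit n i * (-2) ^ i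

lemma nbS_zero (n : ℤ) : nbS 0 n = n % 2 := by
  simp [nbS, nbDigit]

lemma nbS_succ (η : ℕ) (n : ℤ) :
    nbS (η + 1) n = n % 2 + (-2) * nbS η ((n - n % 2) / (-2)) := by
  unfold nbS
  rw [Finset.sum_range_succ']
  simp only [nbDigit, pow_zero, mul_one, pow_succ, Finset.mul_sum]
  rw [add_comm]
  congr 1
  apply Finset.sum_congr rfl
  intro i _
  ring

lemma nbChop (n : ℤ) : (-2) * ((n - n % 2) / (-2)) = n - n % 2 := by
  rw [mul_comm]
  apply Int.ediv_mul_cancel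
  rw [Int.neg_dvd]
  omega

lemma nbS_bounds : ∀ (η : ℕ) (n : ℤ),
    (Even η → -(2 * 2 ^ η - 2) ≤ 3 * nbS η n ∧ 3 * nbS η n ≤ 4 * 2 ^ η - 1) ∧
    (¬ Even η → -(4 * 2 ^ η - 2) ≤ 3 * nbS η n ∧ 3 * nbS η n ≤ 2 * 2 ^ η - 1) := by
  intro η
  induction η with
  | zero =>
    intro n
    rw [nbS_zero]
    have : n % 2 = 0 ∨ n % 2 = 1 := by omega
    constructor
    · intro _; norm_num; omega
    · intro h; exact absurd Even.zero h
  | succ η ih =>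
    intro n
    rw [nbS_succ]
    obtain ⟨h1, h2⟩ := ih ((n - n % 2) / (-2))
    set s := nbS η ((n - n % 2) / (-2)) with hs
    have hr : n % 2 = 0 ∨ n % 2 = 1 := by omega
    have hp : (2:ℤ) ^ (η + 1) = 2 * 2 ^ η := by ring
    rw [hp]
    constructor
    · intro he
      have ho : ¬ Even η := by
        rw [Nat.even_add_one] at he; exact he
      obtain ⟨a, b⟩ := h2 ho
      rcases hr with hr | hr <;> rw [hr] <;> constructor <;> linarith
    · intro ho
      have he : Even η := by
        rw [Nat.even_add_one] at ho; simpa using ho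
      obtain ⟨a, b⟩ := h1 he
      rcases hr with hr | hr <;> rw [hr] <;> constructor <;> linarith

lemma nbS_dvd : ∀ (η : ℕ) (n : ℤ), (2:ℤ) ^ (η + 1) ∣ nbS η n - n := by
  intro η
  induction η with
  | zero =>
    intro n
    rw [nbS_zero]
    have : n % 2 = 0 ∨ n % 2 = 1 := by omega
    omega
  | succ η ih =>
    intro n
    rw [nbS_succ]
    obtain ⟨c, hc⟩ := ih ((n - n % 2) / (-2))
    have hch := nbChop n
    refine ⟨-c, ?_⟩
    linear_combination (-2:ℤ) * hc + hch

lemma pow2_mod3 : ∀ η : ℕ, (Even η → 2 ^ η % 3 = 1) ∧ (¬ Even η → 2 ^ η % 3 = 2) := by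
  intro η
  induction η with
  | zero => simp
  | succ η ih =>
    obtain ⟨h1, h2⟩ := ih
    have hp : (2:ℕ) ^ (η + 1) = 2 * 2 ^ η := by ring
    constructor <;> intro h <;> rw [Nat.even_add_one] at h <;> rw [hp]
    · have := h2 h; omega
    · have := h1 (not_not.mp h); omega

lemma nbS_eq_even (η : ℕ) (he : Even η) (n k : ℤ) (hd : (2:ℤ) ^ (η + 1) ∣ k - n)
    (h1 : -(2 * 2 ^ η - 2) ≤ 3 * k) (h2 : 3 * k ≤ 4 * 2 ^ η - 1) : nbS η n = k := by
  obtain ⟨a, b⟩ := (nbS_bounds η n).1 he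
  have hd2 := nbS_dvd η n
  have hdd : (2:ℤ) ^ (η + 1) ∣ nbS η n - k := by
    have := dvd_sub hd2 hd
    have he' : nbS η n - n - (k - n) = nbS η n - k := by ring
    rwa [he'] at this
  have hz : nbS η n - k = 0 := by
    apply Int.eq_zero_of_abs_lt_dvd hdd
    have hp : (2:ℤ) ^ (η + 1) = 2 * 2 ^ η := by ring
    rw [abs_lt, hp]
    constructor <;> linarith
  linarith

lemma nbS_eq_odd (η : ℕ) (ho : ¬ Even η) (n k : ℤ) (hd : (2:ℤ) ^ (η + 1) ∣ k - n)
    (h1 : -(4 * 2 ^ η - 2) ≤ 3 * k) (h2 : 3 * k ≤ 2 * 2 ^ η - 1) : nbS η n = k := by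
  obtain ⟨a, b⟩ := (nbS_bounds η n).2 ho
  have hd2 := nbS_dvd η n
  have hdd : (2:ℤ) ^ (η + 1) ∣ nbS η n - k := by
    have := dvd_sub hd2 hd
    have he' : nbS η n - n - (k - n) = nbS η n - k := by ring
    rwa [he'] at this
  have hz : nbS η n - k = 0 := by
    apply Int.eq_zero_of_abs_lt_dvd hdd
    have hp : (2:ℤ) ^ (η + 1) = 2 * 2 ^ η := by ring
    rw [abs_lt, hp]
    constructor <;> linarith
  linarith

lemma gaussZ (M : ℕ) : (∑ n ∈ Finset.range M, (n:ℤ)) * 2 = M * (M - 1) := by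
  induction M with
  | zero => simp
  | succ M ih =>
    rw [Finset.sum_range_succ]
    push_cast
    push_cast at ih
    ring_nf
    ring_nf at ih
    linarith

lemma F_succ (η : ℕ) :
    (∑ d : Fin (η + 2) → Fin 2, ∑ i : Fin (η + 2), ((d i : ℕ) : ℚ) * (-2) ^ (i : ℕ))
      = 2 ^ (η + 1)
        - 4 * ∑ d : Fin (η + 1) → Fin 2, ∑ i : Fin (η + 1), ((d i : ℕ) : ℚ) * (-2) ^ (i : ℕ) := by
  rw [← Equiv.sum_comp (Fin.consEquiv (fun _ : Fin (η + 2) => Fin 2))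
      (fun d => ∑ i : Fin (η + 2), ((d i : ℕ) : ℚ) * (-2) ^ (i : ℕ))]
  rw [Fintype.sum_prod_type]
  simp only [Fin.consEquiv_apply]
  have hinner : ∀ (p : Fin 2) (d : Fin (η + 1) → Fin 2),
      (∑ i : Fin (η + 2), ((Fin.cons (α := fun _ => Fin 2) p d i : ℕ) : ℚ) * (-2) ^ (i : ℕ))
        = ((p : ℕ) : ℚ) + (-2) * ∑ i : Fin (η + 1), ((d i : ℕ) : ℚ) * (-2) ^ (i : ℕ) := by
    intro p d
    rw [Fin.sum_univ_succ]
    simp only [Fin.cons_zero, Fin.cons_succ, Fin.val_zero, pow_zero, mul_one, Fin.val_succ]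
    rw [Finset.mul_sum]
    congr 1
    apply Finset.sum_congr rfl
    intro i _
    ring
  simp only [hinner]
  rw [Fin.sum_univ_two]
  simp only [Finset.sum_add_distrib, Finset.sum_const, Finset.card_univ]
  have hcard : Fintype.card (Fin (η + 1) → Fin 2) = 2 ^ (η + 1) := by
    simp [Fintype.card_fun]
  rw [hcard]
  simp only [Fin.val_zero, Fin.val_one, Nat.cast_zero, Nat.cast_one, smul_zero, nsmul_eq_mul,
    mul_one]
  simp only [← Finset.mul_sum]
  push_cast
  ring

lemma F_val : ∀ η : ℕ,
    (∑ d : Fin (η + 1) → Fin 2, ∑ i : Fin (η + 1), ((d i : ℕ) : ℚ) * (-2) ^ (i : ℕ))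
      = 2 ^ η * (1 - (-2) ^ (η + 1)) / 3 := by
  intro η
  induction η with
  | zero =>
    rw [← Equiv.sum_comp (Equiv.funUnique (Fin 1) (Fin 2)).symm
        (fun d : Fin 1 → Fin 2 => ∑ i : Fin 1, ((d i : ℕ) : ℚ) * (-2) ^ (i : ℕ))]
    simp [Fin.sum_univ_one, Fin.sum_univ_two, Equiv.funUnique]
    norm_num
  | succ η ih =>
    rw [F_succ, ih]
    field_simp
    ring


/-- **Negabinary truncation error (Lemma 4.2, exact form).**
(i) `n - t_η(n)` lies in `[-(2^{η+1}-2)/3, (2^{η+2}-1)/3]` for even `η` and in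
`[-(2^{η+2}-2)/3, (2^{η+1}-1)/3]` for odd `η`.
(ii) If the digits `D₀, …, D_η` are independent fair bits and
`R = ∑ Dᵢ (-2)^i`, then `E[-R] = ((-2)^{η+1} - 1)/6`.
(iii) In particular, for `N` uniform on `{0, …, 2^{η+1}-1}` (on which the low
`η+1` negabinary digits are independent fair bits),
`E[t_η(N) - N] = ((-2)^{η+1} - 1)/6`: the truncation error is biased. -/
theorem negabinary_truncation_biased (η : ℕ) :
    (∀ n : ℤ,
        if Even η then
          n - tNeg η n ∈ Set.Icc (-((2 ^ (η + 1) - 2) / 3) : ℤ) ((2 ^ (η + 2) - 1) / 3)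
        else
          n - tNeg η n ∈ Set.Icc (-((2 ^ (η + 2) - 2) / 3) : ℤ) ((2 ^ (η + 1) - 1) / 3)) ∧
      (∑ d : Fin (η + 1) → Fin 2,
            -(∑ i : Fin (η + 1), ((d i : ℕ) : ℚ) * (-2) ^ (i : ℕ))) / 2 ^ (η + 1) =
        ((-2 : ℚ) ^ (η + 1) - 1) / 6 ∧
      (∑ n ∈ Finset.range (2 ^ (η + 1)), ((tNeg η (n : ℤ) - (n : ℤ) : ℤ) : ℚ)) / 2 ^ (η + 1) =
        ((-2 : ℚ) ^ (η + 1) - 1) / 6 := by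
  have hSdef : ∀ n : ℤ, n - tNeg η n = nbS η n := by
    intro n; simp [tNeg, nbS]
  refine ⟨?_, ?_, ?_⟩
  · -- part (i)
    intro n
    by_cases he : Even η
    · rw [if_pos he]
      obtain ⟨a, b⟩ := (nbS_bounds η n).1 he
      obtain ⟨T, hT⟩ : ∃ T : ℕ, 2 ^ η = 3 * T + 1 := by
        have := (pow2_mod3 η).1 he
        exact ⟨2 ^ η / 3, by omega⟩
      have hTz : (2:ℤ) ^ η = 3 * T + 1 := by exact_mod_cast congrArg (Nat.cast (R := ℤ)) hT
      have hp1 : (2:ℤ) ^ (η + 1) = 2 * (3 * T + 1) := by rw [pow_succ, hTz]; ring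
      have hp2 : (2:ℤ) ^ (η + 2) = 4 * (3 * T + 1) := by
        rw [pow_succ, pow_succ, hTz]; ring
      rw [Set.mem_Icc, hSdef n, hp1, hp2]
      rw [hTz] at a b
      omega
    · rw [if_neg he]
      obtain ⟨a, b⟩ := (nbS_bounds η n).2 he
      obtain ⟨T, hT⟩ : ∃ T : ℕ, 2 ^ η = 3 * T + 2 := by
        have := (pow2_mod3 η).2 he
        exact ⟨2 ^ η / 3, by omega⟩
      have hTz : (2:ℤ) ^ η = 3 * T + 2 := by exact_mod_cast congrArg (Nat.cast (R := ℤ)) hT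
      have hp1 : (2:ℤ) ^ (η + 1) = 2 * (3 * T + 2) := by rw [pow_succ, hTz]; ring
      have hp2 : (2:ℤ) ^ (η + 2) = 4 * (3 * T + 2) := by
        rw [pow_succ, pow_succ, hTz]; ring
      rw [Set.mem_Icc, hSdef n, hp1, hp2]
      rw [hTz] at a b
      omega
  · -- part (ii)
    rw [Finset.sum_neg_distrib, F_val η]
    have h2 : (2:ℚ) ^ (η + 1) ≠ 0 := by positivity
    field_simp
    ring
  · -- part (iii)
    have hz : (∑ n ∈ Finset.range (2 ^ (η + 1)), (tNeg η (n : ℤ) - (n : ℤ)))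
        = -(∑ n ∈ Finset.range (2 ^ (η + 1)), nbS η (n : ℤ)) := by
      rw [← Finset.sum_neg_distrib]
      apply Finset.sum_congr rfl
      intro n _
      simp [tNeg, nbS]
    have hcast : (∑ n ∈ Finset.range (2 ^ (η + 1)), ((tNeg η (n : ℤ) - (n : ℤ) : ℤ) : ℚ))
        = ((-(∑ n ∈ Finset.range (2 ^ (η + 1)), nbS η (n : ℤ)) : ℤ) : ℚ) := by
      rw [← hz]
      norm_cast
    by_cases he : Even η
    · obtain ⟨T, hT⟩ : ∃ T : ℕ, 2 ^ η = 3 * T + 1 := by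
        have := (pow2_mod3 η).1 he
        exact ⟨2 ^ η / 3, by omega⟩
      have hTz : (2:ℤ) ^ η = 3 * T + 1 := by exact_mod_cast congrArg (Nat.cast (R := ℤ)) hT
      have hM : 2 ^ (η + 1) = 6 * T + 2 := by rw [pow_succ, hT]; ring
      have hmz : (2:ℤ) ^ (η + 1) = 6 * T + 2 := by rw [pow_succ, hTz]; ring
      have hKM : 4 * T + 2 ≤ 6 * T + 2 := by omega
      have hG : (∑ n ∈ Finset.range (2 ^ (η + 1)), nbS η (n : ℤ))
          = (3 * T + 1) * (2 * T + 1) := by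
        rw [hM, Finset.range_eq_Ico,
          ← Finset.sum_Ico_consecutive _ (Nat.zero_le (4 * T + 2)) hKM]
        have e1 : ∑ n ∈ Finset.Ico 0 (4 * T + 2), nbS η (n : ℤ)
            = ∑ n ∈ Finset.Ico 0 (4 * T + 2), (n : ℤ) := by
          apply Finset.sum_congr rfl
          intro n hn
          rw [Finset.mem_Ico] at hn
          apply nbS_eq_even η he _ _ (by simp) <;> rw [hTz] <;> omega
        have e2 : ∑ n ∈ Finset.Ico (4 * T + 2) (6 * T + 2), nbS η (n : ℤ)
            = ∑ n ∈ Finset.Ico (4 * T + 2) (6 * T + 2), ((n : ℤ) - (6 * T + 2)) := by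
          apply Finset.sum_congr rfl
          intro n hn
          rw [Finset.mem_Ico] at hn
          apply nbS_eq_even η he _ _ ⟨-1, by rw [hmz]; ring⟩ <;> rw [hTz] <;> omega
        rw [e1, e2, Finset.sum_sub_distrib, Finset.sum_const, Nat.card_Ico]
        have hcard2 : (6 * T + 2) - (4 * T + 2) = 2 * T := by omega
        rw [hcard2, Finset.sum_Ico_eq_sub _ hKM, ← Finset.range_eq_Ico]
        simp only [nsmul_eq_mul]
        have g1 := gaussZ (6 * T + 2)
        push_cast at g1 ⊢
        linarith
      rw [hcast, hG]
      have hq : (2:ℚ) ^ (η + 1) = 6 * T + 2 := by exact_mod_cast congrArg (Nat.cast (R := ℚ)) hM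
      have hneg : (-2:ℚ) ^ (η + 1) = -(2:ℚ) ^ (η + 1) := Odd.neg_pow (Even.add_one he) 2
      rw [hneg, hq]
      push_cast
      rw [div_eq_div_iff (by positivity) (by norm_num)]
      ring
    · obtain ⟨T, hT⟩ : ∃ T : ℕ, 2 ^ η = 3 * T + 2 := by
        have := (pow2_mod3 η).2 he
        exact ⟨2 ^ η / 3, by omega⟩
      have hTz : (2:ℤ) ^ η = 3 * T + 2 := by exact_mod_cast congrArg (Nat.cast (R := ℤ)) hT
      have hM : 2 ^ (η + 1) = 6 * T + 4 := by rw [pow_succ, hT]; ring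
      have hmz : (2:ℤ) ^ (η + 1) = 6 * T + 4 := by rw [pow_succ, hTz]; ring
      have hKM : 2 * T + 2 ≤ 6 * T + 4 := by omega
      have hG : (∑ n ∈ Finset.range (2 ^ (η + 1)), nbS η (n : ℤ))
          = -((3 * T + 2) * (2 * T + 1)) := by
        rw [hM, Finset.range_eq_Ico,
          ← Finset.sum_Ico_consecutive _ (Nat.zero_le (2 * T + 2)) hKM]
        have e1 : ∑ n ∈ Finset.Ico 0 (2 * T + 2), nbS η (n : ℤ)
            = ∑ n ∈ Finset.Ico 0 (2 * T + 2), (n : ℤ) := by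
          apply Finset.sum_congr rfl
          intro n hn
          rw [Finset.mem_Ico] at hn
          apply nbS_eq_odd η he _ _ (by simp) <;> rw [hTz] <;> omega
        have e2 : ∑ n ∈ Finset.Ico (2 * T + 2) (6 * T + 4), nbS η (n : ℤ)
            = ∑ n ∈ Finset.Ico (2 * T + 2) (6 * T + 4), ((n : ℤ) - (6 * T + 4)) := by
          apply Finset.sum_congr rfl
          intro n hn
          rw [Finset.mem_Ico] at hn
          apply nbS_eq_odd η he _ _ ⟨-1, by rw [hmz]; ring⟩ <;> rw [hTz] <;> omega
        rw [e1, e2, Finset.sum_sub_distrib, Finset.sum_const, Nat.card_Ico]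
        have hcard2 : (6 * T + 4) - (2 * T + 2) = 4 * T + 2 := by omega
        rw [hcard2, Finset.sum_Ico_eq_sub _ hKM, ← Finset.range_eq_Ico]
        simp only [nsmul_eq_mul]
        have g1 := gaussZ (6 * T + 4)
        push_cast at g1 ⊢
        linarith
      rw [hcast, hG]
      have hq : (2:ℚ) ^ (η + 1) = 6 * T + 4 := by exact_mod_cast congrArg (Nat.cast (R := ℚ)) hM
      have hneg : (-2:ℚ) ^ (η + 1) = (2:ℚ) ^ (η + 1) := by
        have : Even (η + 1) := by
          rw [Nat.even_add_one]; exact he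
        exact this.neg_pow 2
      rw [hneg, hq]
      push_cast
      rw [div_eq_div_iff (by positivity) (by norm_num)]
      ring
end

section
/- (Lemma 4.3 of the paper, deterministic part.) For every a ∈ ℤ⁴ there exist θ₁, …, θ₆ ∈ {−1/2, 0}, each equal to the rounding error ⌊x/2⌋ − x/2 incurred at one of the six floor-halving operations performed by L̃ on input a, such that, computing in ℚ⁴, L·a − L̃(a) = Θ(θ₁,…,θ₆). -/
open Matrix

/-- ZFP's forward decorrelating transform. -/
def L : Matrix (Fin 4) (Fin 4) ℚ :=
  (1 / 16 : ℚ) • !![4, 4, 4, 4; 5, 1, -1, -5; -4, 4, 4, -4; -2, 6, -6, 2]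

/-- Floor halving `r(x) = ⌊x/2⌋`. -/
def half (x : ℤ) : ℤ := Int.fdiv x 2

/-- Rounding error `⌊x/2⌋ - x/2` of a floor halving. -/
def rerr (x : ℤ) : ℚ := (half x : ℚ) - (x : ℚ) / 2

/- Inputs of the six floor-halving operations performed, in order, by ZFP's
lossy forward transform `L̃` on `(x₁,x₂,x₃,x₄) = (a 0, a 1, a 2, a 3)`. -/
/-- input of the halving `x₁ ← r(x₁+x₄)` -/
def m1 (a : Fin 4 → ℤ) : ℤ := a 0 + a 3
/-- input of the halving `x₃ ← r(x₃+x₂)` -/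
def m2 (a : Fin 4 → ℤ) : ℤ := a 2 + a 1
/-- input of the halving `x₁ ← r(x₁+x₃)` -/
def m3 (a : Fin 4 → ℤ) : ℤ := half (m1 a) + half (m2 a)
/-- input of the halving `x₄ ← r(x₄+x₂)` -/
def m4 (a : Fin 4 → ℤ) : ℤ := (a 3 - half (m1 a)) + (a 1 - half (m2 a))
/-- input of the halving `r(x₂)` in `x₄ ← x₄ + r(x₂)` -/
def m5 (a : Fin 4 → ℤ) : ℤ := (a 1 - half (m2 a)) - half (m4 a)
/-- input of the halving `r(x₄)` in `x₂ ← x₂ - r(x₄)` -/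
def m6 (a : Fin 4 → ℤ) : ℤ := half (m4 a) + half (m5 a)

/-- ZFP's lossy forward transform `L̃ : ℤ⁴ → ℤ⁴`. -/
def Ltilde (a : Fin 4 → ℤ) : Fin 4 → ℤ :=
  ![half (m3 a), m5 a - half (m6 a), half (m2 a) - half (m3 a), m6 a]

/-- The error form `Θ(θ₁,…,θ₆)`. -/
def Theta (θ : Fin 6 → ℚ) : Fin 4 → ℚ :=
  ![-((θ 0 + θ 1) / 2 + θ 3),
    -((5 * θ 0 - θ 1) / 8 - (5 / 4) * θ 2 - θ 4 / 2 - θ 5),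
    -((θ 1 - θ 0) / 2 - θ 3),
    -(-(θ 0 + 3 * θ 1) / 4 + θ 2 / 2 + θ 4)]


lemma rerr_cases (x : ℤ) : rerr x = -(1 / 2) ∨ rerr x = 0 := by
  rcases Int.even_or_odd x with ⟨k, hk⟩ | ⟨k, hk⟩
  · right
    subst hk
    unfold rerr half
    have : (k + k).fdiv 2 = k := by
      rw [Int.fdiv_eq_ediv_of_nonneg _ (by norm_num)]; omega
    rw [this]; push_cast; ring
  · left
    subst hk
    unfold rerr half
    have : (2 * k + 1).fdiv 2 = k := by
      rw [Int.fdiv_eq_ediv_of_nonneg _ (by norm_num)]; omega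
    rw [this]; push_cast; ring

lemma half_eq (x : ℤ) : (half x : ℚ) = (x : ℚ) / 2 + rerr x := by
  unfold rerr; ring

/-- **Lemma 4.3, deterministic part.**  For every `a ∈ ℤ⁴` there are
`θ₁, …, θ₆ ∈ {-1/2, 0}`, each the rounding error of one of the six
floor-halving operations performed by `L̃` on input `a`, with
`L·a - L̃(a) = Θ(θ₁,…,θ₆)` in `ℚ⁴`. -/
theorem lossy_transform_error (a : Fin 4 → ℤ) :
    ∃ θ : Fin 6 → ℚ,
      (∀ j, θ j = -(1 / 2) ∨ θ j = 0) ∧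
      θ 0 = rerr (m1 a) ∧ θ 1 = rerr (m2 a) ∧ θ 2 = rerr (m4 a) ∧
      θ 3 = rerr (m3 a) ∧ θ 4 = rerr (m5 a) ∧ θ 5 = rerr (m6 a) ∧
      (fun i => L.mulVec (fun j => (a j : ℚ)) i - (Ltilde a i : ℚ)) = Theta θ := by
  refine ⟨![rerr (m1 a), rerr (m2 a), rerr (m4 a), rerr (m3 a), rerr (m5 a), rerr (m6 a)],
    ?_, rfl, rfl, rfl, rfl, rfl, rfl, ?_⟩
  · intro j; fin_cases j <;> exact rerr_cases _
  · have e5 : ((m5 a : ℤ) : ℚ)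
        = ((a 1 : ℚ) - (half (m2 a) : ℚ)) - (half (m4 a) : ℚ) := by
      simp only [m5]; push_cast; ring
    have e6 : ((m6 a : ℤ) : ℚ) = (half (m4 a) : ℚ) + (half (m5 a) : ℚ) := by
      simp only [m6]; push_cast; ring
    have q1 : (half (m1 a) : ℚ) = ((a 0 : ℚ) + (a 3 : ℚ)) / 2 + rerr (m1 a) := by
      rw [half_eq]; simp only [m1]; push_cast; ring
    have q2 : (half (m2 a) : ℚ) = ((a 2 : ℚ) + (a 1 : ℚ)) / 2 + rerr (m2 a) := by
      rw [half_eq]; simp only [m2]; push_cast; ring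
    have q3 : (half (m3 a) : ℚ)
        = ((half (m1 a) : ℚ) + (half (m2 a) : ℚ)) / 2 + rerr (m3 a) := by
      rw [half_eq]; simp only [m3]; push_cast; ring
    have q4 : (half (m4 a) : ℚ)
        = (((a 3 : ℚ) - (half (m1 a) : ℚ)) + ((a 1 : ℚ) - (half (m2 a) : ℚ))) / 2
          + rerr (m4 a) := by
      rw [half_eq]; simp only [m4]; push_cast; ring
    have q5 : (half (m5 a) : ℚ)
        = (((a 1 : ℚ) - (half (m2 a) : ℚ)) - (half (m4 a) : ℚ)) / 2 + rerr (m5 a) := by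
      rw [half_eq, e5]
    have q6 : (half (m6 a) : ℚ)
        = ((half (m4 a) : ℚ) + (half (m5 a) : ℚ)) / 2 + rerr (m6 a) := by
      rw [half_eq, e6]
    have hv2 : (![rerr (m1 a), rerr (m2 a), rerr (m4 a), rerr (m3 a), rerr (m5 a),
        rerr (m6 a)] : Fin 6 → ℚ) 2 = rerr (m4 a) := rfl
    have hv3 : (![rerr (m1 a), rerr (m2 a), rerr (m4 a), rerr (m3 a), rerr (m5 a),
        rerr (m6 a)] : Fin 6 → ℚ) 3 = rerr (m3 a) := rfl
    have hv4 : (![rerr (m1 a), rerr (m2 a), rerr (m4 a), rerr (m3 a), rerr (m5 a),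
        rerr (m6 a)] : Fin 6 → ℚ) 4 = rerr (m5 a) := rfl
    have hv5 : (![rerr (m1 a), rerr (m2 a), rerr (m4 a), rerr (m3 a), rerr (m5 a),
        rerr (m6 a)] : Fin 6 → ℚ) 5 = rerr (m6 a) := rfl
    have i2 : (⟨2, by omega⟩ : Fin 4) = 2 := rfl
    have i3 : (⟨3, by omega⟩ : Fin 4) = 3 := rfl
    funext i
    fin_cases i <;>
      · simp only [L, Theta, Ltilde, Matrix.mulVec, dotProduct, Fin.sum_univ_four,
          Matrix.smul_apply, Matrix.cons_val', Matrix.cons_val_zero, Matrix.cons_val_one,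
          Matrix.head_cons, Matrix.empty_val', Matrix.cons_val_fin_one, Matrix.of_apply,
          Matrix.cons_val_two, Matrix.cons_val_three, Matrix.tail_cons, Matrix.cons_val_succ, Matrix.head_fin_const,
          smul_eq_mul, Fin.isValue, Fin.mk_zero, Fin.mk_one, i2, i3, hv2, hv3, hv4, hv5,
          Int.cast_add, Int.cast_sub, Int.cast_neg, e6, e5, q6, q5, q4, q3, q2, q1]
        ring
end

section
/- (Lemma 4.3 of the paper, expected value.) If θ₁, …, θ₆ are independent random variables, each uniformly distributed on the two-element set {−1/2, 0}, then the expected value of the random vector Θ(θ₁,…,θ₆) equals E₁ = (1/2, −9/16, −1/4, 1/8). In particular the expected error of ZFP's lossy 1-d forward transform is the nonzero vector E₁, so the transform error is biased. -/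
/-- `E₁ = (1/2, -9/16, -1/4, 1/8)`. -/
def E1 : Fin 4 → ℚ := ![1 / 2, -(9 / 16), -(1 / 4), 1 / 8]

lemma key (g : Fin 2 → ℚ) (j : Fin 6) :
    ∑ f : Fin 6 → Fin 2, g (f j) = 32 * (g 0 + g 1) := by
  rw [← Equiv.sum_comp (Equiv.funSplitAt j (Fin 2)).symm (fun f => g (f j)),
    Fintype.sum_prod_type]
  have hc : Fintype.card {k : Fin 6 // k ≠ j} = 5 := by
    simp [Fintype.card_subtype_compl]
  simp [Equiv.funSplitAt_symm_apply, Finset.sum_const, Fintype.card_fun, hc,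
    Fin.sum_univ_two]
  ring

@[simp] lemma vec6_four (a b c d e f : ℚ) : ![a,b,c,d,e,f] 4 = e := rfl
@[simp] lemma vec6_five (a b c d e f : ℚ) : ![a,b,c,d,e,f] 5 = f := rfl

lemma lin (c : Fin 6 → ℚ) :
    ∑ f : Fin 6 → Fin 2, ∑ j, c j * (![(-(1/2) : ℚ), 0] (f j))
      = -16 * ∑ j, c j := by
  rw [Finset.sum_comm]
  have : ∀ j : Fin 6, ∑ f : Fin 6 → Fin 2, c j * (![(-(1/2) : ℚ), 0] (f j))
      = c j * (-16) := by
    intro j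
    rw [← Finset.mul_sum, key]
    norm_num
  simp_rw [this, ← Finset.sum_mul]
  ring

/-- **Lemma 4.3, expected value.**  If `θ₁, …, θ₆` are independent and
uniform on `{-1/2, 0}` (equivalently, the tuple is uniform on `{-1/2,0}^6`),
then `E[Θ(θ₁,…,θ₆)] = E₁ = (1/2, -9/16, -1/4, 1/8) ≠ 0`: the expected error of
ZFP's lossy 1-d forward transform is the nonzero vector `E₁`. -/
theorem expected_transform_error_biased :
    (fun i => (∑ f : Fin 6 → Fin 2,
        Theta (fun j => ![(-(1 / 2) : ℚ), 0] (f j)) i) / 2 ^ 6) = E1 ∧ E1 ≠ 0 := by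
  refine ⟨?_, ?_⟩
  · funext i
    fin_cases i
    · have h : (∑ f : Fin 6 → Fin 2, Theta (fun j => ![(-(1/2) : ℚ), 0] (f j)) 0)
          = ∑ f : Fin 6 → Fin 2, ∑ j, (![-(1/2), -(1/2), 0, -1, 0, 0] : Fin 6 → ℚ) j
              * ![(-(1/2) : ℚ), 0] (f j) := by
        refine Finset.sum_congr rfl fun f _ => ?_
        simp [Theta, Fin.sum_univ_six]
        ring
      show (∑ f : Fin 6 → Fin 2, Theta (fun j => ![(-(1 / 2) : ℚ), 0] (f j)) 0) / 2 ^ 6 = E1 0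
      rw [h, lin]
      simp [E1, Fin.sum_univ_six]
      norm_num
    · have h : (∑ f : Fin 6 → Fin 2, Theta (fun j => ![(-(1/2) : ℚ), 0] (f j)) 1)
          = ∑ f : Fin 6 → Fin 2, ∑ j, (![-(5/8), 1/8, 5/4, 0, 1/2, 1] : Fin 6 → ℚ) j
              * ![(-(1/2) : ℚ), 0] (f j) := by
        refine Finset.sum_congr rfl fun f _ => ?_
        simp [Theta, Fin.sum_univ_six]
        ring
      show (∑ f : Fin 6 → Fin 2, Theta (fun j => ![(-(1 / 2) : ℚ), 0] (f j)) 1) / 2 ^ 6 = E1 1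
      rw [h, lin]
      simp [E1, Fin.sum_univ_six]
      norm_num
    · have h : (∑ f : Fin 6 → Fin 2, Theta (fun j => ![(-(1/2) : ℚ), 0] (f j)) 2)
          = ∑ f : Fin 6 → Fin 2, ∑ j, (![1/2, -(1/2), 0, 1, 0, 0] : Fin 6 → ℚ) j
              * ![(-(1/2) : ℚ), 0] (f j) := by
        refine Finset.sum_congr rfl fun f _ => ?_
        simp [Theta, Fin.sum_univ_six]
        ring
      show (∑ f : Fin 6 → Fin 2, Theta (fun j => ![(-(1 / 2) : ℚ), 0] (f j)) 2) / 2 ^ 6 = E1 2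
      rw [h, lin]
      simp [E1, Fin.sum_univ_six]
      norm_num
    · have h : (∑ f : Fin 6 → Fin 2, Theta (fun j => ![(-(1/2) : ℚ), 0] (f j)) 3)
          = ∑ f : Fin 6 → Fin 2, ∑ j, (![1/4, 3/4, -(1/2), 0, -1, 0] : Fin 6 → ℚ) j
              * ![(-(1/2) : ℚ), 0] (f j) := by
        refine Finset.sum_congr rfl fun f _ => ?_
        simp [Theta, Fin.sum_univ_six]
        ring
      show (∑ f : Fin 6 → Fin 2, Theta (fun j => ![(-(1 / 2) : ℚ), 0] (f j)) 3) / 2 ^ 6 = E1 3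
      rw [h, lin]
      simp [E1, Fin.sum_univ_six]
      norm_num
  · intro h
    have := congrFun h 0
    simp [E1] at this
end

section
/- (Theorem 4.4 of the paper, two-dimensional case.) Let A and B be random 4×4 rational matrices such that all eight columns (the four columns of A and the four columns of B) are independent and each is distributed as Θ(θ₁,…,θ₆) with θ₁,…,θ₆ independent uniform on {−1/2, 0}. Then the expected value of the random matrix L·Aᵀ + B (the 2-d transform error, column-pass errors propagated through the exact row transform plus row-pass errors) is the matrix e₁·E₁ᵀ + E₁·𝟙ᵀ; that is, its (i,j) entry equals (E₁)_i + (E₁)_j when i = 1 and equals (E₁)_i when i ≠ 1. -/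
open Matrix

/-- A column distributed as `Θ(θ)`, `θ` uniform on `{-1/2,0}^6`, is indexed by
an outcome `f : Fin 6 → Fin 2`. -/
def colVal (f : Fin 6 → Fin 2) : Fin 4 → ℚ :=
  Theta fun j => ![(-(1 / 2) : ℚ), 0] (f j)

/-!
Θ is linear and the six θ's have mean −1/4, so every column of A and of B has mean
Θ(−1/4, …, −1/4) = E₁, i.e. E[A] = E[B] = E₁𝟙ᵀ. By linearity of expectation
E[L·Aᵀ + B] = L·(E₁𝟙ᵀ)ᵀ + E₁𝟙ᵀ = (L𝟙)·E₁ᵀ + E₁𝟙ᵀ, and L𝟙 = e₁ because the last three rows of L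
sum to zero.
-/

theorem Fintype.sum_comp_eval {ι α M : Type*} [Fintype ι] [DecidableEq ι] [Fintype α]
    [AddCommMonoid M] (j : ι) (g : α → M) :
    ∑ f : ι → α, g (f j) = Fintype.card α ^ (Fintype.card ι - 1) • ∑ a, g a := by
  rw [← (Equiv.piSplitAt j fun _ => α).symm.sum_comp, Fintype.sum_prod_type]
  simp [Equiv.piSplitAt_symm_apply, Fintype.card_subtype_compl, Fintype.card_pi, Finset.smul_sum]

theorem Matrix.sum_of_comp_eq_smul_vecMulVec {m n α R : Type*} [Fintype n] [DecidableEq n]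
    [Fintype α] [Semiring R] (c : α → m → R) :
    ∑ g : n → α, Matrix.of (fun i j => c (g j) i) =
      Fintype.card α ^ (Fintype.card n - 1) • vecMulVec (∑ a, c a) (fun _ => 1) := by
  ext i j
  simp only [Matrix.sum_apply, Matrix.of_apply, Matrix.smul_apply, vecMulVec_apply,
    Finset.sum_apply, mul_one]
  exact Fintype.sum_comp_eval j (c · i)

theorem Finset.sum_sum_add {α β M : Type*} [AddCommMonoid M] (s : Finset α) (t : Finset β)
    (F : α → M) (G : β → M) :
    ∑ x ∈ s, ∑ y ∈ t, (F x + G y) = t.card • ∑ x ∈ s, F x + s.card • ∑ y ∈ t, G y := by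
  simp [Finset.sum_add_distrib, Finset.smul_sum]

def thetaLinearMap : (Fin 6 → ℚ) →ₗ[ℚ] Fin 4 → ℚ where
  toFun := Theta
  map_add' x y := by
    ext i
    fin_cases i <;>
      simp only [Theta, Pi.add_apply, Fin.reduceFinMk, Fin.zero_eta, Fin.mk_one, cons_val] <;> ring
  map_smul' c x := by
    ext i
    fin_cases i <;>
      simp only [Theta, Pi.smul_apply, smul_eq_mul, RingHom.id_apply, Fin.reduceFinMk,
        Fin.zero_eta, Fin.mk_one, cons_val] <;> ring

theorem Theta_sum {ι : Type*} (s : Finset ι) (x : ι → Fin 6 → ℚ) :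
    Theta (∑ i ∈ s, x i) = ∑ i ∈ s, Theta (x i) :=
  map_sum thetaLinearMap x s

theorem sum_colVal : ∑ f : Fin 6 → Fin 2, colVal f = (64 : ℚ) • E1 := by
  have sum_theta : ∑ f : Fin 6 → Fin 2, (fun j => ![(-(1 / 2) : ℚ), 0] (f j)) = fun _ => -16 := by
    ext j
    rw [Finset.sum_apply]
    simp only [Fintype.sum_comp_eval j, Fin.sum_univ_two, cons_val_zero, cons_val_one,
      Fintype.card_fin]
    norm_num
  simp only [colVal]
  rw [← Theta_sum, sum_theta]
  ext i
  fin_cases i <;> norm_num [Theta, E1]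

theorem L_mulVec_one : L *ᵥ (fun _ => 1) = ![1, 0, 0, 0] := by
  ext i
  fin_cases i <;> norm_num [L, mulVec, dotProduct, Fin.sum_univ_four, cons_val_two, cons_val_three]

/-- **Theorem 4.4, 2-d case.**  If `A` and `B` are random `4×4` matrices whose
eight columns are independent, each distributed as `Θ(θ)` with `θ₁,…,θ₆`
independent uniform on `{-1/2,0}` (so the joint outcome is a uniform pair
`(gA, gB)` of column configurations), then
`E[L·Aᵀ + B] = e₁·E₁ᵀ + E₁·𝟙ᵀ`. -/
theorem expected_2d_transform_error :
    ((2 : ℚ) ^ 48)⁻¹ •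
        (∑ gA : Fin 4 → Fin 6 → Fin 2, ∑ gB : Fin 4 → Fin 6 → Fin 2,
          (L * (Matrix.of fun i j => colVal (gA j) i)ᵀ +
            Matrix.of fun i j => colVal (gB j) i)) =
      vecMulVec ![1, 0, 0, 0] E1 + vecMulVec E1 (fun _ => 1) := by
  have sum_columns : ∑ g : Fin 4 → Fin 6 → Fin 2, Matrix.of (fun i j => colVal (g j) i) =
      (2 ^ 24 : ℚ) • vecMulVec E1 (fun _ => 1) := by
    rw [Matrix.sum_of_comp_eq_smul_vecMulVec, sum_colVal, smul_vecMulVec,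
      ← Nat.cast_smul_eq_nsmul ℚ, smul_smul]
    norm_num [Fintype.card_pi]
  rw [Finset.sum_sum_add, ← Matrix.mul_sum, ← Matrix.transpose_sum, sum_columns, transpose_smul,
    transpose_vecMulVec, Matrix.mul_smul, mul_vecMulVec, L_mulVec_one]
  simp only [Finset.card_univ, Fintype.card_fun, Fintype.card_fin, ← Nat.cast_smul_eq_nsmul ℚ,
    smul_smul, smul_add]
  norm_num only [one_smul]
end

section
/- (Core of Lemma 5.1 of the paper, one-dimensional case.) Let k, η ∈ ℕ and ℓ ∈ ℤ, and let X = (X₁,X₂,X₃,X₄) have independent components, each uniformly distributed on the symmetric integer set {−(2^k−1), …, 2^k−1}. Then the expected value of the propagated binary-truncation error 2^ℓ·Linv·(τ_η(X) − X) (with τ_η applied componentwise, computed in ℚ⁴) is the zero vector; i.e., the error introduced by ZFP's block-floating-point conversion (Step 2) is unbiased. -/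
open Matrix

/-- ZFP's backward decorrelating transform. -/
def Linv : Matrix (Fin 4) (Fin 4) ℚ :=
  (1 / 4 : ℚ) • !![4, 6, -4, -1; 4, 2, 4, 5; 4, -2, 4, -5; 4, -6, -4, 1]

/-- Sign-magnitude binary truncation `τ_η`. -/
def btrunc (η : ℕ) (n : ℤ) : ℤ :=
  n.sign * (2 ^ (η + 1) * ((n.natAbs / 2 ^ (η + 1) : ℕ) : ℤ))

/-- The symmetric integer set `{-(2^k-1), …, 2^k-1}`. -/
noncomputable def symmSet (k : ℕ) : Finset ℤ := Finset.Icc (-(2 ^ k - 1)) (2 ^ k - 1)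

/-! Truncation error is an odd function of the sample and the sample set is symmetric, so each
coordinate's error sums to zero. Every entry of the propagated error is a linear combination of the
coordinate errors, each depending on a single coordinate, so summing out that coordinate kills it. -/

lemma btrunc_odd (η : ℕ) : (btrunc η).Odd := fun n => by
  simp [btrunc, Int.sign_neg, neg_mul]

lemma symmSet_map_neg (k : ℕ) : (symmSet k).map (Equiv.neg ℤ).toEmbedding = symmSet k := by
  ext x
  simp only [symmSet, Finset.mem_map_equiv, Equiv.neg_symm, Equiv.neg_apply, Finset.mem_Icc]
  omega

lemma sum_symmSet_btrunc_sub_self (k η : ℕ) :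
    ∑ x ∈ symmSet k, ((btrunc η x - x : ℤ) : ℚ) = 0 :=
  Function.Odd.finsetSum_eq_zero (fun x => by push_cast [btrunc_odd η x]; ring) (symmSet_map_neg k)

lemma sum_sum_sum_sum_dotProduct_comp_eq_zero {ι R : Type*} [CommSemiring R] (s : Finset ι)
    {g : ι → R} (hg : ∑ x ∈ s, g x = 0) (c : Fin 4 → R) :
    ∑ x1 ∈ s, ∑ x2 ∈ s, ∑ x3 ∈ s, ∑ x4 ∈ s, c ⬝ᵥ (g ∘ ![x1, x2, x3, x4]) = 0 := by
  simp [dotProduct, Fin.sum_univ_four, Finset.sum_add_distrib, ← Finset.mul_sum, hg]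

/-- **Lemma 5.1, core (1-d).**  If `X = (X₁,X₂,X₃,X₄)` has independent
components, each uniform on `{-(2^k-1), …, 2^k-1}`, then the expected value of
the propagated binary-truncation error `2^ℓ · Linv · (τ_η(X) - X)` is zero:
ZFP's Step 2 error is unbiased. -/
theorem step2_error_unbiased (k η : ℕ) (ℓ : ℤ) :
    ∀ i : Fin 4,
      (∑ x1 ∈ symmSet k, ∑ x2 ∈ symmSet k, ∑ x3 ∈ symmSet k, ∑ x4 ∈ symmSet k,
          (2 : ℚ) ^ ℓ *
            Linv.mulVec
              (fun j => ((btrunc η (![x1, x2, x3, x4] j) - ![x1, x2, x3, x4] j : ℤ) : ℚ)) i) /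
        ((symmSet k).card : ℚ) ^ 4 = 0 := by
  intro i
  have hsum := sum_sum_sum_sum_dotProduct_comp_eq_zero (symmSet k)
    (sum_symmSet_btrunc_sub_self k η) ((2 : ℚ) ^ ℓ • Linv i)
  simp only [smul_dotProduct, smul_eq_mul] at hsum
  exact div_eq_zero_iff.mpr (Or.inl hsum)
end

section
/- (Lemma 6.1 of the paper, postcompression rounding, exact form.) Let η ∈ ℕ and let c_η := (1 − (−2)^{η+1})/6 ∈ ℚ. For every d ∈ {0,1}^{η+1} with r := Σ_{i=0}^{η} d_i·(−2)^i, the offset truncation error satisfies −r + c_η ∈ [−(2^{η+1}−1)/2, (2^{η+1}−1)/2]; i.e., adding the constant c_η after negabinary truncation centers the error in a symmetric interval of length 2^{η+1} − 1. Moreover, if the digits D₀,…,D_η are independent fair Bernoulli random variables in {0,1} and R := Σ_{i=0}^{η} D_i·(−2)^i, then E[−R + c_η] = 0. -/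
/-- **Lemma 6.1 (postcompression rounding, exact form).**  Let
`c_η = (1 - (-2)^{η+1})/6`.  For every tuple `d ∈ {0,1}^{η+1}` of discarded
low negabinary digits with value `r = ∑_{i≤η} dᵢ (-2)^i`, the offset
truncation error `-r + c_η` lies in the symmetric interval
`[-(2^{η+1}-1)/2, (2^{η+1}-1)/2]`; and for independent fair bits
`D₀,…,D_η` with `R = ∑ Dᵢ (-2)^i` (i.e. a uniform digit tuple),
`E[-R + c_η] = 0`. -/
theorem postcompression_rounding (η : ℕ) :
    (∀ d : Fin (η + 1) → Fin 2,
        -(∑ i : Fin (η + 1), ((d i : ℕ) : ℚ) * (-2) ^ (i : ℕ)) +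
            (1 - (-2 : ℚ) ^ (η + 1)) / 6 ∈
          Set.Icc (-((2 ^ (η + 1) - 1) / 2) : ℚ) ((2 ^ (η + 1) - 1) / 2)) ∧
      (∑ d : Fin (η + 1) → Fin 2,
          (-(∑ i : Fin (η + 1), ((d i : ℕ) : ℚ) * (-2) ^ (i : ℕ)) +
            (1 - (-2 : ℚ) ^ (η + 1)) / 6)) / 2 ^ (η + 1) = 0 := by
  have hgeo : ∀ x : ℚ, x ≠ 1 → (∑ i : Fin (η+1), x ^ (i:ℕ)) = (x^(η+1)-1)/(x-1) := by
    intro x hx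
    rw [Fin.sum_univ_eq_sum_range, geom_sum_eq hx]
  have h1 : (∑ i : Fin (η+1), ((-2:ℚ)) ^ (i:ℕ)) = (1 - (-2:ℚ)^(η+1))/3 := by
    rw [hgeo (-2) (by norm_num)]; ring
  have h2 : (∑ i : Fin (η+1), (2:ℚ) ^ (i:ℕ)) = 2^(η+1) - 1 := by
    rw [hgeo 2 (by norm_num)]
    have : (2:ℚ) - 1 = 1 := by norm_num
    rw [this, div_one]
  have habs : ∀ i : ℕ, |(-2:ℚ)^i| = 2^i := by
    intro i; rw [abs_pow]; norm_num
  constructor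
  · intro d
    have hub : (∑ i : Fin (η+1), ((d i : ℕ):ℚ) * (-2)^(i:ℕ)) ≤
        ∑ i : Fin (η+1), (((-2:ℚ))^(i:ℕ) + 2^(i:ℕ))/2 := by
      apply Finset.sum_le_sum
      intro i _
      have h2i : (-(2:ℚ)^(i:ℕ)) ≤ (-2:ℚ)^(i:ℕ) ∧ (-2:ℚ)^(i:ℕ) ≤ 2^(i:ℕ) := by
        constructor
        · rw [← habs i]; exact neg_abs_le _
        · rw [← habs i]; exact le_abs_self _
      have hd : (d i : ℕ) = 0 ∨ (d i : ℕ) = 1 := by omega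
      rcases hd with h | h <;> rw [h] <;> push_cast <;> linarith [h2i.1, h2i.2]
    have hlb : (∑ i : Fin (η+1), (((-2:ℚ))^(i:ℕ) - 2^(i:ℕ))/2) ≤
        ∑ i : Fin (η+1), ((d i : ℕ):ℚ) * (-2)^(i:ℕ) := by
      apply Finset.sum_le_sum
      intro i _
      have h2i : (-(2:ℚ)^(i:ℕ)) ≤ (-2:ℚ)^(i:ℕ) ∧ (-2:ℚ)^(i:ℕ) ≤ 2^(i:ℕ) := by
        constructor
        · rw [← habs i]; exact neg_abs_le _
        · rw [← habs i]; exact le_abs_self _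
      have hd : (d i : ℕ) = 0 ∨ (d i : ℕ) = 1 := by omega
      rcases hd with h | h <;> rw [h] <;> push_cast <;> linarith [h2i.1, h2i.2]
    have e1 : (∑ i : Fin (η+1), (((-2:ℚ))^(i:ℕ) + 2^(i:ℕ))/2)
        = ((1 - (-2:ℚ)^(η+1))/3 + (2^(η+1) - 1))/2 := by
      rw [← h1, ← h2, ← Finset.sum_add_distrib, ← Finset.sum_div]
    have e2 : (∑ i : Fin (η+1), (((-2:ℚ))^(i:ℕ) - 2^(i:ℕ))/2)
        = ((1 - (-2:ℚ)^(η+1))/3 - (2^(η+1) - 1))/2 := by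
      rw [← h1, ← h2, ← Finset.sum_sub_distrib, ← Finset.sum_div]
    rw [e1] at hub; rw [e2] at hlb
    exact Set.mem_Icc.mpr ⟨by linarith, by linarith⟩
  · have hcard : Fintype.card (Fin (η+1) → Fin 2) = 2^(η+1) := by
      simp [Fintype.card_fun]
    have hsub : ∀ i : Fin (η+1), Fintype.card {j : Fin (η+1) // j ≠ i} = η := by
      intro i
      simp [Fintype.card_subtype_compl]
    have hinner : ∀ i : Fin (η+1),
        (∑ d : Fin (η+1) → Fin 2, ((d i : ℕ):ℚ)) = 2^η := by
      intro i
      rw [Fintype.sum_equiv (Equiv.funSplitAt i (Fin 2))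
        (fun d => ((d i : ℕ):ℚ)) (fun p => ((p.1 : ℕ):ℚ)) (fun d => rfl)]
      rw [Fintype.sum_prod_type]
      simp [Finset.sum_const, hsub i]
    have hswap : (∑ d : Fin (η+1) → Fin 2,
        ∑ i : Fin (η+1), ((d i : ℕ):ℚ) * (-2)^(i:ℕ))
        = 2^η * ((1 - (-2:ℚ)^(η+1))/3) := by
      rw [Finset.sum_comm]
      have : ∀ i : Fin (η+1), (∑ d : Fin (η+1) → Fin 2, ((d i : ℕ):ℚ) * (-2)^(i:ℕ))
          = 2^η * (-2)^(i:ℕ) := by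
        intro i
        rw [← Finset.sum_mul, hinner i]
      rw [Finset.sum_congr rfl (fun i _ => this i), ← Finset.mul_sum, h1]
    rw [Finset.sum_add_distrib, Finset.sum_neg_distrib, hswap, Finset.sum_const]
    have : (Finset.univ : Finset (Fin (η+1) → Fin 2)).card = 2^(η+1) := by
      rw [Finset.card_univ, hcard]
    rw [this]
    have hp : (2:ℚ)^(η+1) = 2 * 2^η := by ring
    rw [div_eq_zero_iff]
    left
    rw [nsmul_eq_mul]
    push_cast
    simp only [pow_succ]
    ring
end

section
/- (Lemma 6.2 of the paper, precompression rounding, exact form.) Let η ∈ ℕ. For any fixed offset ρ ∈ ℤ, if A is uniformly distributed on any complete residue system modulo 2^{η+1} (e.g., on {0, 1, …, 2^{η+1} − 1}), then the precompression-rounded truncation error satisfies E[t_η(A + ρ) − A] = ρ − (1 − (−2)^{η+1})/6. In particular, choosing ρ as close as possible to (1 − (−2)^{η+1})/6 makes the expected truncation error at most 1/2 in absolute value, neutralizing the bias of the uncorrected truncation. -/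
def low (η : ℕ) (n : ℤ) : ℤ := ∑ i ∈ Finset.range (η + 1), nbDigit n i * (-2) ^ i

lemma tNeg_eq (η : ℕ) (n : ℤ) : tNeg η n = n - low η n := rfl

lemma low_zero (n : ℤ) : low 0 n = n % 2 := by
  simp [low, nbDigit]

lemma low_succ (η : ℕ) (n : ℤ) :
    low (η + 1) n = n % 2 + (-2) * low η ((n - n % 2) / (-2)) := by
  unfold low
  rw [Finset.sum_range_succ']
  simp only [nbDigit, pow_zero, mul_one]
  rw [Finset.mul_sum, add_comm]
  congr 1
  refine Finset.sum_congr rfl fun i _ => by ring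

lemma low_period (η : ℕ) : ∀ n k : ℤ, low η (n + 2 ^ (η + 1) * k) = low η n := by
  induction η with
  | zero =>
    intro n k
    rw [low_zero, low_zero]
    omega
  | succ η ih =>
    intro n k
    rw [low_succ, low_succ]
    have hmod : (n + 2 ^ (η + 2) * k) % 2 = n % 2 := by
      have h : (2:ℤ) ^ (η + 2) * k = 2 * (2 ^ (η+1) * k) := by ring
      rw [h, Int.add_mul_emod_self_left]
    rw [hmod]
    congr 1
    have h2 : n + 2 ^ (η + 2) * k - n % 2 = (n - n % 2) + (-(2 ^ (η+1) * k)) * (-2) := by ring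
    rw [h2, Int.add_mul_ediv_right _ _ (by norm_num : (-2:ℤ) ≠ 0)]
    rw [show (n - n % 2) / (-2) + -(2 ^ (η+1) * k) = (n - n % 2) / (-2) + 2 ^ (η+1) * (-k) by ring]
    rw [ih]

def K : ℕ → ℤ
  | 0 => 1
  | (η+1) => 2 ^ (η+1) - 4 * K η

lemma shift_div (x t : ℤ) : (x + 2*t - (x + 2*t) % 2) / (-2) = (x - x % 2)/(-2) - t := by
  have h : (x + 2*t) % 2 = x % 2 := by omega
  rw [h, show x + 2*t - x % 2 = (x - x % 2) + (-t)*(-2) by ring,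
      Int.add_mul_ediv_right _ _ (by norm_num : (-2:ℤ) ≠ 0)]
  ring

lemma sum_range_two_mul (n : ℕ) (g : ℕ → ℤ) :
    ∑ r ∈ Finset.range (2*n), g r = ∑ q ∈ Finset.range n, (g (2*q) + g (2*q+1)) := by
  induction n with
  | zero => simp
  | succ n ih =>
    rw [show 2*(n+1) = 2*n + 1 + 1 by ring, Finset.sum_range_succ, Finset.sum_range_succ,
        Finset.sum_range_succ, ih]
    ring

lemma sum_low (η : ℕ) : ∀ c s : ℤ, s = 1 ∨ s = -1 →
    ∑ r ∈ Finset.range (2^(η+1)), low η (c + s * r) = K η := by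
  induction η with
  | zero =>
    intro c s hs
    rw [show (2:ℕ)^1 = 2 from rfl, Finset.sum_range_succ, Finset.sum_range_succ,
        Finset.sum_range_zero, low_zero, low_zero]
    show 0 + (c + s * ((0:ℕ):ℤ)) % 2 + (c + s * ((1:ℕ):ℤ)) % 2 = 1
    push_cast
    rcases hs with rfl | rfl <;> omega
  | succ η ih =>
    intro c s hs
    rw [show (2:ℕ)^(η+1+1) = 2 * 2^(η+1) by ring, sum_range_two_mul]
    have hterm : ∀ q ∈ Finset.range (2^(η+1)),
        low (η+1) (c + s * ((2*q : ℕ):ℤ)) + low (η+1) (c + s * ((2*q+1 : ℕ):ℤ))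
        = 1 + (-2) * low η ((c - c % 2)/(-2) + (-s) * (q:ℤ))
            + (-2) * low η ((c + s - (c+s) % 2)/(-2) + (-s) * (q:ℤ)) := by
      intro q _
      rw [low_succ, low_succ]
      have e1 : c + s * ((2*q : ℕ):ℤ) = c + 2 * (s*q) := by push_cast; ring
      have e2 : c + s * ((2*q+1 : ℕ):ℤ) = (c + s) + 2 * (s*q) := by push_cast; ring
      rw [e1, e2, shift_div, shift_div]
      have hpar : (c + 2*(s*q)) % 2 + (c + s + 2*(s*q)) % 2 = 1 := by
        rcases hs with rfl | rfl <;> omega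
      rw [show (c - c % 2)/(-2) - s*(q:ℤ) = (c - c % 2)/(-2) + (-s) * (q:ℤ) by ring,
          show (c + s - (c+s) % 2)/(-2) - s*(q:ℤ) = (c + s - (c+s) % 2)/(-2) + (-s) * (q:ℤ) by ring]
      linarith [hpar]
    rw [Finset.sum_congr rfl hterm]
    have hs' : -s = 1 ∨ -s = -1 := by rcases hs with rfl | rfl <;> simp
    rw [Finset.sum_add_distrib, Finset.sum_add_distrib, ← Finset.mul_sum, ← Finset.mul_sum,
        ih _ _ hs', ih _ _ hs', Finset.sum_const, Finset.card_range]
    show (2^(η+1) : ℕ) • (1:ℤ) + (-2) * K η + (-2) * K η = K (η+1)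
    rw [show K (η+1) = 2^(η+1) - 4 * K η from rfl]
    simp [nsmul_eq_mul]
    ring

lemma K_eq3 (η : ℕ) : 3 * K η = 2 ^ η * (1 - (-2) ^ (η + 1)) := by
  induction η with
  | zero => rfl
  | succ η ih =>
    rw [show K (η+1) = 2^(η+1) - 4 * K η from rfl]
    linear_combination (-4 : ℤ) * ih

lemma sum_crs (η : ℕ) (ρ : ℤ) (S : Finset ℤ)
    (hcard : S.card = 2 ^ (η + 1))
    (hres : Set.InjOn (fun a : ℤ => (a : ZMod (2 ^ (η + 1)))) S) :
    ∑ a ∈ S, low η (a + ρ) = K η := by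
  have hM : (0:ℤ) < 2 ^ (η+1) := by positivity
  have hcast : ((2^(η+1):ℕ):ℤ) = (2:ℤ)^(η+1) := by push_cast; ring
  have hmem : ∀ (a : ℤ), a ∈ S → ((a + ρ) % 2 ^ (η+1)).toNat ∈ Finset.range (2^(η+1)) := by
    intro a ha
    rw [Finset.mem_range]
    have h1 := Int.emod_nonneg (a + ρ) (ne_of_gt hM)
    have h2 := Int.emod_lt_of_pos (a + ρ) hM
    omega
  have hinj : ∀ (a b : ℤ) (ha : a ∈ S) (hb : b ∈ S),
      ((a + ρ) % 2 ^ (η+1)).toNat = ((b + ρ) % 2 ^ (η+1)).toNat → a = b := by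
    intro a b ha hb hab
    have h1 := Int.emod_nonneg (a + ρ) (ne_of_gt hM)
    have h2 := Int.emod_nonneg (b + ρ) (ne_of_gt hM)
    have hm : a + ρ ≡ b + ρ [ZMOD (2:ℤ)^(η+1)] := by
      show (a + ρ) % 2 ^ (η+1) = (b + ρ) % 2 ^ (η+1)
      omega
    have hme : a ≡ b [ZMOD (2:ℤ)^(η+1)] := by simpa using hm.sub_right ρ
    apply hres ha hb
    show (a : ZMod (2^(η+1))) = b
    rw [ZMod.intCast_eq_intCast_iff, hcast]
    exact hme
  have key : ∑ a ∈ S, low η (a + ρ)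
      = ∑ r ∈ Finset.range (2^(η+1)), low η ((0:ℤ) + 1 * (r:ℤ)) := by
    apply Finset.sum_bij (fun a _ => ((a + ρ) % 2 ^ (η+1)).toNat)
    · exact hmem
    · exact fun a ha b hb => hinj a b ha hb
    · intro r hr
      obtain ⟨a, ha, hav⟩ := Finset.surj_on_of_inj_on_of_card_le
        (fun (a : ℤ) (_ : a ∈ S) => ((a + ρ) % 2 ^ (η+1)).toNat)
        hmem (fun a b ha hb => hinj a b ha hb)
        (by rw [Finset.card_range, hcard]) r hr
      exact ⟨a, ha, hav.symm⟩
    · intro a ha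
      have h1 := Int.emod_nonneg (a + ρ) (ne_of_gt hM)
      have heq : ((((a + ρ) % 2 ^ (η+1)).toNat : ℤ)) = (a + ρ) % 2 ^ (η+1) :=
        Int.toNat_of_nonneg h1
      rw [zero_add, one_mul, heq]
      conv_lhs => rw [show a + ρ = (a + ρ) % 2 ^ (η+1) + 2 ^ (η+1) * ((a + ρ) / 2 ^ (η+1)) by
        rw [Int.emod_add_mul_ediv]]
      exact low_period η _ _
  rw [key, sum_low η 0 1 (Or.inl rfl)]

/-- **Lemma 6.2 (precompression rounding, exact form).**  Fix an offset
`ρ ∈ ℤ` and let `A` be uniform on a complete residue system `S` modulo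
`2^{η+1}` (a set of `2^{η+1}` integers with pairwise distinct residues).  Then
`E[t_η(A + ρ) - A] = ρ - (1 - (-2)^{η+1})/6`; in particular, if `ρ` is within
`1/2` of `(1 - (-2)^{η+1})/6`, the expected truncation error is at most `1/2`
in absolute value, neutralizing the bias of the uncorrected truncation. -/
theorem precompression_rounding (η : ℕ) (ρ : ℤ) (S : Finset ℤ)
    (hcard : S.card = 2 ^ (η + 1))
    (hres : Set.InjOn (fun a : ℤ => (a : ZMod (2 ^ (η + 1)))) S) :
    (∑ a ∈ S, ((tNeg η (a + ρ) - a : ℤ) : ℚ)) / (S.card : ℚ) =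
        (ρ : ℚ) - (1 - (-2 : ℚ) ^ (η + 1)) / 6 ∧
      (|(ρ : ℚ) - (1 - (-2 : ℚ) ^ (η + 1)) / 6| ≤ 1 / 2 →
        |(∑ a ∈ S, ((tNeg η (a + ρ) - a : ℤ) : ℚ)) / (S.card : ℚ)| ≤ 1 / 2) := by
  have hsum : ∑ a ∈ S, (tNeg η (a + ρ) - a) = 2 ^ (η+1) * ρ - K η := by
    have h1 : ∀ a ∈ S, tNeg η (a + ρ) - a = ρ - low η (a + ρ) := fun a _ => by
      rw [tNeg_eq]; ring
    rw [Finset.sum_congr rfl h1, Finset.sum_sub_distrib, sum_crs η ρ S hcard hres,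
        Finset.sum_const, hcard, nsmul_eq_mul]
    push_cast
    ring
  have hK : (3:ℚ) * (K η : ℚ) = 2 ^ η * (1 - (-2) ^ (η + 1)) := by
    have h2 : ((3 * K η : ℤ) : ℚ) = ((2 ^ η * (1 - (-2) ^ (η + 1)) : ℤ) : ℚ) := by
      rw [K_eq3 η]
    push_cast at h2
    exact h2
  have hKQ : (K η : ℚ) = 2 ^ η * (1 - (-2:ℚ) ^ (η + 1)) / 3 := by linarith [hK]
  have h6 : ((2:ℚ)) ^ (η+1) ≠ 0 := by positivity
  have hmain : (∑ a ∈ S, ((tNeg η (a + ρ) - a : ℤ) : ℚ)) / (S.card : ℚ) =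
      (ρ : ℚ) - (1 - (-2 : ℚ) ^ (η + 1)) / 6 := by
    have hc : (S.card : ℚ) = 2 ^ (η+1) := by rw [hcard]; push_cast; ring
    have hs : (∑ a ∈ S, ((tNeg η (a + ρ) - a : ℤ) : ℚ)) = 2 ^ (η+1) * ρ - K η := by
      rw [← Int.cast_sum, hsum]
      push_cast
      ring
    rw [hc, hs, hKQ]
    field_simp
    ring
  exact ⟨hmain, fun h => hmain ▸ h⟩
end

section
/- (Biased error means, Table C.1 of the paper.) Let Y = (Y₁,Y₂,Y₃,Y₄) be a random vector whose components are independent and each uniformly distributed on the real interval (−2/3, 1/3) (the negabinary quantization error in ulps, even case). Then the expected value of the decompressed error vector X := Linv·Y is E[X] = (−5/24, −5/8, −1/24, 5/24); in particular each spatial position within a ZFP block has a distinct nonzero error bias. -/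
open MeasureTheory Matrix

/-- ZFP's backward decorrelating transform (over `ℝ`). -/
noncomputable def LinvR : Matrix (Fin 4) (Fin 4) ℝ :=
  (1 / 4 : ℝ) • !![4, 6, -4, -1; 4, 2, 4, 5; 4, -2, 4, -5; 4, -6, -4, 1]

/-- The law of `Y`: four independent coordinates, each uniform on the
unit-length interval `(-2/3, 1/3)` (so the uniform probability measure is the
restricted Lebesgue measure). -/
noncomputable def μbias : Measure (Fin 4 → ℝ) :=
  Measure.pi fun _ => volume.restrict (Set.Ioo (-(2 / 3) : ℝ) (1 / 3))

noncomputable def νbias : Measure ℝ := volume.restrict (Set.Ioo (-(2 / 3) : ℝ) (1 / 3))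

instance : IsProbabilityMeasure νbias := by
  constructor
  rw [νbias, Measure.restrict_apply MeasurableSet.univ, Set.univ_inter, Real.volume_Ioo]
  norm_num

lemma ν_mean : ∫ x, x ∂νbias = -(1/6) := by
  rw [νbias, ← MeasureTheory.integral_Ioc_eq_integral_Ioo,
    ← intervalIntegral.integral_of_le (by norm_num)]
  simp
  norm_num

lemma map_eval (i : Fin 4) : Measure.map (fun y : Fin 4 → ℝ => y i) μbias = νbias := by
  ext s hs
  rw [Measure.map_apply (measurable_pi_apply i) hs]
  classical
  rw [show (fun y : Fin 4 → ℝ => y i) = Function.eval i from rfl, Set.eval_preimage,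
    μbias, Measure.pi_pi]
  classical
  rw [Finset.prod_eq_single i (fun j _ hj => by
      rw [Function.update_of_ne hj, Measure.restrict_apply MeasurableSet.univ,
        Set.univ_inter, Real.volume_Ioo]; norm_num)
    (by simp)]
  rw [Function.update_self]; rfl

lemma ν_integrable_id : Integrable (id : ℝ → ℝ) νbias := by
  rw [νbias]
  exact (continuous_id.integrableOn_Icc (a := (-(2/3):ℝ)) (b := 1/3)).mono_set
    Set.Ioo_subset_Icc_self

lemma eval_integrable (i : Fin 4) : Integrable (fun y : Fin 4 → ℝ => y i) μbias := by
  have hm : AEStronglyMeasurable (id : ℝ → ℝ)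
      (Measure.map (fun y : Fin 4 → ℝ => y i) μbias) := by
    rw [map_eval i]; exact ν_integrable_id.aestronglyMeasurable
  have := (integrable_map_measure hm (measurable_pi_apply i).aemeasurable).mp
    (by rw [map_eval i]; exact ν_integrable_id)
  simpa using this

lemma eval_integral (i : Fin 4) : ∫ y, y i ∂μbias = -(1/6) := by
  have hm : AEStronglyMeasurable (id : ℝ → ℝ)
      (Measure.map (fun y : Fin 4 → ℝ => y i) μbias) := by
    rw [map_eval i]; exact ν_integrable_id.aestronglyMeasurable
  have := MeasureTheory.integral_map (φ := fun y : Fin 4 → ℝ => y i) (f := (id : ℝ → ℝ))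
    (measurable_pi_apply i).aemeasurable hm
  rw [map_eval i] at this
  rw [← ν_mean]
  simpa using this.symm

/-- **Biased error means (Table C.1).**  If `Y` has independent components,
each uniform on `(-2/3, 1/3)`, and `X = Linv·Y`, then
`E[X] = (-5/24, -5/8, -1/24, 5/24)`; each component of this bias is nonzero
and they are pairwise distinct. -/
theorem biased_error_means :
    (∀ i, ∫ y, LinvR.mulVec y i ∂μbias =
        ![-(5 / 24), -(5 / 8), -(1 / 24), (5 / 24 : ℝ)] i) ∧
      (∀ i, ![-(5 / 24), -(5 / 8), -(1 / 24), (5 / 24 : ℝ)] i ≠ 0) ∧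
      Function.Injective ![-(5 / 24), -(5 / 8), -(1 / 24), (5 / 24 : ℝ)] := by
  refine ⟨fun i => ?_, fun i => by fin_cases i <;> norm_num, ?_⟩
  · have h1 : (fun y : Fin 4 → ℝ => LinvR.mulVec y i)
        = fun y => ∑ j, LinvR i j * y j := by
      ext y; simp [Matrix.mulVec, dotProduct]
    rw [h1, integral_finset_sum _ (fun j _ => (eval_integrable j).const_mul _)]
    simp_rw [integral_const_mul, eval_integral]
    fin_cases i <;>
      simp [LinvR, Fin.sum_univ_four, Matrix.smul_apply] <;> norm_num
  · intro a b h
    fin_cases a <;> fin_cases b <;> simp_all <;> norm_num at h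
end

section
/- (Biased error second moments, Table C.1 of the paper.) Let Y = (Y₁,Y₂,Y₃,Y₄) be a random vector whose components are independent and each uniformly distributed on the real interval (−2/3, 1/3). Then the second moments of the components of X := Linv·Y are E[X₁²] = 29/72, E[X₂²] = 17/24, E[X₃²] = 23/72, and E[X₄²] = 29/72. -/
/-!
Write `m` and `σ²` for the mean and variance of a single coordinate. Row `i` of `Linv·Y` is a
sum of independent variables `Linv i j • Y j`, so its variance is `σ² · ∑ⱼ (Linv i j)²` and its
mean is `m · ∑ⱼ Linv i j`; the second moment is the variance plus the squared mean. For the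
uniform law on `(-2/3, 1/3)`, `m = -1/6` and `σ² = 1/12`.
-/

open MeasureTheory Matrix

open ProbabilityTheory

theorem integral_sq_eq_variance_add_sq {Ω : Type*} [MeasurableSpace Ω] {μ : Measure Ω}
    [IsProbabilityMeasure μ] {X : Ω → ℝ} (hX : MemLp X 2 μ) :
    ∫ ω, X ω ^ 2 ∂μ = Var[X; μ] + (∫ ω, X ω ∂μ) ^ 2 := by
  rw [variance_eq_sub hX]
  simp [Pi.pow_apply]

section Pi

variable {ι κ : Type*} [Fintype ι] {ν : Measure ℝ} [IsProbabilityMeasure ν]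

theorem integral_mulVec_sq_pi (hν : MemLp id 2 ν) (A : Matrix κ ι ℝ) (i : κ) :
    ∫ y, (A *ᵥ y) i ^ 2 ∂Measure.pi (fun _ => ν) =
      Var[id; ν] * ∑ j, A i j ^ 2 + ((∑ j, A i j) * ∫ x, x ∂ν) ^ 2 := by
  have hrow : (fun y : ι → ℝ => (A *ᵥ y) i) = ∑ j, fun y => A i j * y j := by
    ext y
    simp [mulVec, dotProduct]
  have hterm : ∀ j, MemLp (fun x : ℝ => A i j * x) 2 ν := fun j => hν.const_mul (A i j)
  have hmem : MemLp (fun y : ι → ℝ => (A *ᵥ y) i) 2 (Measure.pi fun _ => ν) := by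
    rw [hrow]
    exact memLp_finsetSum' _ fun j _ =>
      (hterm j).comp_measurePreserving (measurePreserving_eval _ j)
  have hvar : ∀ j, Var[fun x => A i j * x; ν] = A i j ^ 2 * Var[id; ν] :=
    fun j => variance_const_mul (A i j) id ν
  have hmean : ∫ y, (A *ᵥ y) i ∂Measure.pi (fun _ => ν) = (∑ j, A i j) * ∫ x, x ∂ν := by
    simp only [mulVec, dotProduct]
    rw [integral_finsetSum _ fun j _ => (integrable_eval (hν.integrable one_le_two)).const_mul _]
    simp only [integral_const_mul, integral_eval, Finset.sum_mul]
  rw [integral_sq_eq_variance_add_sq hmem, hrow, variance_sum_pi hterm]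
  simp only [hvar, ← hrow, hmean, ← Finset.sum_mul]
  ring

end Pi

section UniformOnInterval

variable {a b : ℝ}

theorem isProbabilityMeasure_restrict_Ioo (h : b - a = 1) :
    IsProbabilityMeasure (volume.restrict (Set.Ioo a b)) :=
  ⟨by simp [h]⟩

theorem memLp_id_restrict_Ioo (p : ENNReal) : MemLp id p (volume.restrict (Set.Ioo a b)) :=
  memLp_of_bounded ((ae_restrict_mem measurableSet_Ioo).mono fun _ hx => Set.Ioo_subset_Icc_self hx)
    aestronglyMeasurable_id p

theorem setIntegral_Ioo_id (h : a ≤ b) : ∫ x in Set.Ioo a b, x = (b ^ 2 - a ^ 2) / 2 := by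
  rw [← integral_Ioc_eq_integral_Ioo, ← intervalIntegral.integral_of_le h, integral_id]

theorem setIntegral_Ioo_sq (h : a ≤ b) : ∫ x in Set.Ioo a b, x ^ 2 = (b ^ 3 - a ^ 3) / 3 := by
  rw [← integral_Ioc_eq_integral_Ioo, ← intervalIntegral.integral_of_le h, integral_pow]
  norm_num

theorem variance_id_restrict_Ioo_of_sub_eq_one (h : b - a = 1) :
    Var[id; volume.restrict (Set.Ioo a b)] = 1 / 12 := by
  have := isProbabilityMeasure_restrict_Ioo h
  rw [variance_eq_sub (memLp_id_restrict_Ioo 2)]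
  simp only [id, Pi.pow_apply]
  rw [setIntegral_Ioo_id (by linarith), setIntegral_Ioo_sq (by linarith),
    show b = a + 1 by linarith]
  ring

end UniformOnInterval

/-- **Biased error second moments (Table C.1).**  If `Y` has independent
components, each uniform on `(-2/3, 1/3)`, and `X = Linv·Y`, then
`E[X²] = (29/72, 17/24, 23/72, 29/72)`. -/
theorem biased_error_second_moments :
    ∀ i, ∫ y, LinvR.mulVec y i ^ 2 ∂μbias =
      ![29 / 72, 17 / 24, 23 / 72, (29 / 72 : ℝ)] i := by
  intro i
  have hlen : (1 / 3 : ℝ) - -(2 / 3) = 1 := by norm_num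
  have := isProbabilityMeasure_restrict_Ioo hlen
  rw [μbias, integral_mulVec_sq_pi (memLp_id_restrict_Ioo 2),
    variance_id_restrict_Ioo_of_sub_eq_one hlen, setIntegral_Ioo_id (by norm_num)]
  fin_cases i <;> simp [LinvR, Fin.sum_univ_four] <;> norm_num
end

section
/- (Support of the bias-corrected error distribution, Table C.1 of the paper.) Every row of Linv has 1-norm exactly 15/4; consequently, for every y ∈ ℝ⁴ with |y_j| ≤ 1/2 for all j, each component of Linv·y satisfies |(Linv·y)_i| ≤ 15/8, and this bound is attained, so the support of each bias-corrected decompressed error component is exactly [−15/8, 15/8]. -/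
open Matrix

lemma mv0 (y : Fin 4 → ℝ) :
    LinvR.mulVec y 0 = y 0 + (3/2) * y 1 - y 2 - (1/4) * y 3 := by
  simp [LinvR, mulVec, dotProduct, Fin.sum_univ_four]; ring

lemma mv1 (y : Fin 4 → ℝ) :
    LinvR.mulVec y 1 = y 0 + (1/2) * y 1 + y 2 + (5/4) * y 3 := by
  simp [LinvR, mulVec, dotProduct, Fin.sum_univ_four]; ring

lemma mv2 (y : Fin 4 → ℝ) :
    LinvR.mulVec y 2 = y 0 - (1/2) * y 1 + y 2 - (5/4) * y 3 := by
  simp [LinvR, mulVec, dotProduct, Fin.sum_univ_four]; ring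

lemma mv3 (y : Fin 4 → ℝ) :
    LinvR.mulVec y 3 = y 0 - (3/2) * y 1 - y 2 + (1/4) * y 3 := by
  simp [LinvR, mulVec, dotProduct, Fin.sum_univ_four]; ring

/-- **Support of the bias-corrected error distribution (Table C.1).**  Every
row of `Linv` has 1-norm `15/4`; consequently, the image of the box
`{y : |y_j| ≤ 1/2}` under each component of `y ↦ Linv·y` is exactly the
interval `[-15/8, 15/8]` (so the bound `15/8` holds and is attained, and the
support of each bias-corrected decompressed error component is exactly
`[-15/8, 15/8]`). -/
theorem corrected_error_support :
    (∀ i, ∑ j, |LinvR i j| = 15 / 4) ∧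
      ∀ i, (fun y : Fin 4 → ℝ => LinvR.mulVec y i) '' {y | ∀ j, |y j| ≤ 1 / 2} =
        Set.Icc (-(15 / 8) : ℝ) (15 / 8) := by
  constructor
  · intro i
    fin_cases i <;>
      simp [LinvR, Fin.sum_univ_four] <;> norm_num [abs_of_nonneg, abs_of_nonpos]
  · intro i
    have hi : i = 0 ∨ i = 1 ∨ i = 2 ∨ i = 3 := by omega
    ext t
    constructor
    · rintro ⟨y, hy, rfl⟩
      have h0 := abs_le.mp (hy 0)
      have h1 := abs_le.mp (hy 1)
      have h2 := abs_le.mp (hy 2)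
      have h3 := abs_le.mp (hy 3)
      simp only [Set.mem_Icc]
      rcases hi with rfl | rfl | rfl | rfl <;>
        [rw [mv0]; rw [mv1]; rw [mv2]; rw [mv3]] <;>
        constructor <;> linarith [h0.1, h0.2, h1.1, h1.2, h2.1, h2.2, h3.1, h3.2]
    · intro ht
      have ht' := Set.mem_Icc.mp ht
      have habs : |4 * t / 15| ≤ 1 / 2 := by
        rw [abs_le]; constructor <;> nlinarith [ht'.1, ht'.2]
      rcases hi with rfl | rfl | rfl | rfl
      · refine ⟨![4*t/15, 4*t/15, -(4*t/15), -(4*t/15)], ?_, ?_⟩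
        · intro j; fin_cases j <;> simpa [abs_neg] using habs
        · simp only [mv0, Matrix.cons_val_zero, Matrix.cons_val_one, Matrix.head_cons,
            Matrix.cons_val_two, Matrix.tail_cons, Matrix.cons_val_three]; ring
      · refine ⟨![4*t/15, 4*t/15, 4*t/15, 4*t/15], ?_, ?_⟩
        · intro j; fin_cases j <;> simpa [abs_neg] using habs
        · simp only [mv1, Matrix.cons_val_zero, Matrix.cons_val_one, Matrix.head_cons,
            Matrix.cons_val_two, Matrix.tail_cons, Matrix.cons_val_three]; ring
      · refine ⟨![4*t/15, -(4*t/15), 4*t/15, -(4*t/15)], ?_, ?_⟩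
        · intro j; fin_cases j <;> simpa [abs_neg] using habs
        · simp only [mv2, Matrix.cons_val_zero, Matrix.cons_val_one, Matrix.head_cons,
            Matrix.cons_val_two, Matrix.tail_cons, Matrix.cons_val_three]; ring
      · refine ⟨![4*t/15, -(4*t/15), -(4*t/15), 4*t/15], ?_, ?_⟩
        · intro j; fin_cases j <;> simpa [abs_neg] using habs
        · simp only [mv3, Matrix.cons_val_zero, Matrix.cons_val_one, Matrix.head_cons,
            Matrix.cons_val_two, Matrix.tail_cons, Matrix.cons_val_three]; ring
end

section
/- (Supports of the biased error distributions, Table C.1 of the paper.) For every y ∈ ℝ⁴ with y_j ∈ [−2/3, 1/3] for all j, the components of x := Linv·y satisfy x₁ ∈ [−25/12, 5/3], x₂ ∈ [−5/2, 5/4], x₃ ∈ [−23/12, 11/6], and x₄ ∈ [−5/3, 25/12], and each of these bounds is attained for some such y, so these intervals are exactly the supports of the biased decompressed error components. -/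
open Matrix

set_option maxHeartbeats 1000000 in
/-- **Supports of the biased error distributions (Table C.1).**  The image of
the box `{y : y_j ∈ [-2/3, 1/3]}` under the `i`-th component of `y ↦ Linv·y`
is exactly `[-25/12, 5/3]`, `[-5/2, 5/4]`, `[-23/12, 11/6]`, `[-5/3, 25/12]`
for `i = 1, 2, 3, 4` respectively (so all the stated bounds hold and are
attained: these intervals are exactly the supports of the biased decompressed
error components). -/
theorem biased_error_supports :
    ∀ i, (fun y : Fin 4 → ℝ => LinvR.mulVec y i) ''
        {y | ∀ j, y j ∈ Set.Icc (-(2 / 3) : ℝ) (1 / 3)} =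
      Set.Icc (![-(25 / 12), -(5 / 2), -(23 / 12), -(5 / 3 : ℝ)] i)
        (![5 / 3, 5 / 4, 11 / 6, (25 / 12 : ℝ)] i) := by
  intro i
  ext t
  simp only [Set.mem_image, Set.mem_setOf_eq, Set.mem_Icc]
  fin_cases i
  · constructor
    · rintro ⟨y, hy, rfl⟩
      have h0 := hy 0; have h1 := hy 1; have h2 := hy 2; have h3 := hy 3
      simp [LinvR, mulVec, dotProduct, Fin.sum_univ_four]
      constructor <;> nlinarith [h0.1, h0.2, h1.1, h1.2, h2.1, h2.2, h3.1, h3.2]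
    · rintro ⟨ha, hb⟩
      norm_num at ha hb
      set θ : ℝ := (t + 25/12) * (4/15) with hθ
      have hθ0 : 0 ≤ θ := by simp [hθ]; linarith
      have hθ1 : θ ≤ 1 := by simp [hθ]; linarith
      refine ⟨![θ*(1/3)+(1-θ)*(-(2/3)), θ*(1/3)+(1-θ)*(-(2/3)), θ*(-(2/3))+(1-θ)*(1/3), θ*(-(2/3))+(1-θ)*(1/3)], ?_, ?_⟩
      · intro j; fin_cases j <;> simp [Set.mem_Icc] <;> constructor <;> nlinarith
      · simp [LinvR, mulVec, dotProduct, Fin.sum_univ_four, hθ]; ring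
  · constructor
    · rintro ⟨y, hy, rfl⟩
      have h0 := hy 0; have h1 := hy 1; have h2 := hy 2; have h3 := hy 3
      simp [LinvR, mulVec, dotProduct, Fin.sum_univ_four]
      constructor <;> nlinarith [h0.1, h0.2, h1.1, h1.2, h2.1, h2.2, h3.1, h3.2]
    · rintro ⟨ha, hb⟩
      norm_num at ha hb
      set θ : ℝ := (t + 5/2) * (4/15) with hθ
      have hθ0 : 0 ≤ θ := by simp [hθ]; linarith
      have hθ1 : θ ≤ 1 := by simp [hθ]; linarith
      refine ⟨![θ*(1/3)+(1-θ)*(-(2/3)), θ*(1/3)+(1-θ)*(-(2/3)), θ*(1/3)+(1-θ)*(-(2/3)), θ*(1/3)+(1-θ)*(-(2/3))], ?_, ?_⟩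
      · intro j; fin_cases j <;> simp [Set.mem_Icc] <;> constructor <;> nlinarith
      · simp [LinvR, mulVec, dotProduct, Fin.sum_univ_four, hθ]; ring
  · constructor
    · rintro ⟨y, hy, rfl⟩
      have h0 := hy 0; have h1 := hy 1; have h2 := hy 2; have h3 := hy 3
      simp [LinvR, mulVec, dotProduct, Fin.sum_univ_four]
      constructor <;> nlinarith [h0.1, h0.2, h1.1, h1.2, h2.1, h2.2, h3.1, h3.2]
    · rintro ⟨ha, hb⟩
      norm_num at ha hb
      set θ : ℝ := (t + 23/12) * (4/15) with hθ
      have hθ0 : 0 ≤ θ := by simp [hθ]; linarith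
      have hθ1 : θ ≤ 1 := by simp [hθ]; linarith
      refine ⟨![θ*(1/3)+(1-θ)*(-(2/3)), θ*(-(2/3))+(1-θ)*(1/3), θ*(1/3)+(1-θ)*(-(2/3)), θ*(-(2/3))+(1-θ)*(1/3)], ?_, ?_⟩
      · intro j; fin_cases j <;> simp [Set.mem_Icc] <;> constructor <;> nlinarith
      · simp [LinvR, mulVec, dotProduct, Fin.sum_univ_four, hθ]; ring
  · constructor
    · rintro ⟨y, hy, rfl⟩
      have h0 := hy 0; have h1 := hy 1; have h2 := hy 2; have h3 := hy 3
      simp [LinvR, mulVec, dotProduct, Fin.sum_univ_four]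
      constructor <;> nlinarith [h0.1, h0.2, h1.1, h1.2, h2.1, h2.2, h3.1, h3.2]
    · rintro ⟨ha, hb⟩
      norm_num at ha hb
      set θ : ℝ := (t + 5/3) * (4/15) with hθ
      have hθ0 : 0 ≤ θ := by simp [hθ]; linarith
      have hθ1 : θ ≤ 1 := by simp [hθ]; linarith
      refine ⟨![θ*(1/3)+(1-θ)*(-(2/3)), θ*(-(2/3))+(1-θ)*(1/3), θ*(-(2/3))+(1-θ)*(1/3), θ*(1/3)+(1-θ)*(-(2/3))], ?_, ?_⟩
      · intro j; fin_cases j <;> simp [Set.mem_Icc] <;> constructor <;> nlinarith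
      · simp [LinvR, mulVec, dotProduct, Fin.sum_univ_four, hθ]; ring
end
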